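/- For θ ∈ ℝ let Rx(θ) be the 2×2 unitary matrix with rows (cos(θ/2), −i·sin(θ/2)) and (−i·sin(θ/2), cos(θ/2)). Let v, w ∈ {0,1}^n be binary vectors differing in exactly one coordinate, and let ρ and σ be the density matrices of the angle-encoded pure states |v⟩ = ⊗_{i=1}^n Rx(v_i)|0⟩ and |w⟩ = ⊗_{i=1}^n Rx(w_i)|0⟩. Then the trace distance satisfies D(ρ,σ) = sin(1/2). -/

import Mathlib

/-! For unit vectors `ψ, φ` with overlap `z = ⟨ψ|φ⟩`, the difference `A = |ψ⟩⟨ψ| - |φ⟩⟨φ|` is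
Hermitian with `A³ = (1 - |z|²) A`. Hence `B = A² / √(1 - |z|²)` is positive semidefinite with
`B² = A²`, so `|A| = B` and `tr |A| = tr A² / √(1 - |z|²) = 2 √(1 - |z|²)`. Angle encodings are
product states, so their overlap is `∏ᵢ cos ((vᵢ - wᵢ) / 2)`; for binary vectors differing only in
coordinate `j` this is `cos (1/2)`, and `√(1 - cos² (1/2)) = sin (1/2)`. -/

open Matrix BigOperators
open scoped ComplexOrder

namespace QDP

variable {n : Type*} [Fintype n] [DecidableEq n]

/-- Trace distance `D(ρ,σ) = (1/2) tr |ρ - σ|`, where `|A| = sqrt (Aᴴ A)`. -/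
noncomputable def traceDist (ρ σ : Matrix n n ℂ) : ℝ :=
  (1 / 2 : ℝ) *
    (((Matrix.posSemidef_conjTranspose_mul_self (ρ - σ)).isHermitian.eigenvectorUnitary.1 *
      diagonal (((↑) : ℝ → ℂ) ∘ (√·) ∘ (Matrix.posSemidef_conjTranspose_mul_self (ρ - σ)).isHermitian.eigenvalues) *
      (star (Matrix.posSemidef_conjTranspose_mul_self (ρ - σ)).isHermitian.eigenvectorUnitary :
        Matrix n n ℂ)).trace).re

/-- A density matrix: positive semidefinite with trace one. -/
def IsDensity (ρ : Matrix n n ℂ) : Prop := ρ.PosSemidef ∧ ρ.trace = 1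

/-- The largest eigenvalue of a (Hermitian) matrix. -/
noncomputable def lamMax (M : Matrix n n ℂ) : ℝ :=
  if h : M.IsHermitian then ⨆ i, h.eigenvalues i else 0

/-- The smallest eigenvalue of a (Hermitian) matrix. -/
noncomputable def lamMin (M : Matrix n n ℂ) : ℝ :=
  if h : M.IsHermitian then ⨅ i, h.eigenvalues i else 0

/-- Application of a quantum channel given by Kraus matrices. -/
noncomputable def applyChan {ι : Type*} [Fintype ι] (E : ι → Matrix n n ℂ)
    (ρ : Matrix n n ℂ) : Matrix n n ℂ := ∑ j, E j * ρ * (E j)ᴴ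

/-- The dual of a quantum channel given by Kraus matrices. -/
noncomputable def dualChan {ι : Type*} [Fintype ι] (E : ι → Matrix n n ℂ)
    (M : Matrix n n ℂ) : Matrix n n ℂ := ∑ j, (E j)ᴴ * M * E j

/-- `(ε,δ)`-differential privacy within `η` of the quantum algorithm `(E, M)`. -/
def IsDP {ι : Type*} [Fintype ι] {O : Type*} [Fintype O]
    (E : ι → Matrix n n ℂ) (M : O → Matrix n n ℂ) (ε δ η : ℝ) : Prop :=
  ∀ ρ σ : Matrix n n ℂ, IsDensity ρ → IsDensity σ → traceDist ρ σ ≤ η →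
    ∀ S : Finset O,
      (∑ k ∈ S, (M k * applyChan E ρ).trace).re ≤
        Real.exp ε * (∑ k ∈ S, (M k * applyChan E σ).trace).re + δ

/-- Rank-one projection `|ψ⟩⟨ψ|`. -/
noncomputable def proj (ψ : n → ℂ) : Matrix n n ℂ := vecMulVec ψ (star ψ)

end QDP

namespace QDP

/-- The rotation gate `Rx(θ)` about the x-axis. -/
noncomputable def Rx (θ : ℝ) : Matrix (Fin 2) (Fin 2) ℂ :=
  !![((Real.cos (θ / 2) : ℝ) : ℂ), -Complex.I * ((Real.sin (θ / 2) : ℝ) : ℂ);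
     -Complex.I * ((Real.sin (θ / 2) : ℝ) : ℂ), ((Real.cos (θ / 2) : ℝ) : ℂ)]

/-- The basis state `|0⟩ ∈ ℂ²`. -/
def ket0 : Fin 2 → ℂ := fun i => if i = 0 then 1 else 0

/-- Angle encoding of a classical vector `v ∈ ℝⁿ`:
the Kronecker product `Rx(v₁)|0⟩ ⊗ ⋯ ⊗ Rx(vₙ)|0⟩`, as a vector indexed by `Fin m → Fin 2`. -/
noncomputable def angleEncode {m : ℕ} (v : Fin m → ℝ) : (Fin m → Fin 2) → ℂ :=
  fun f => ∏ i, (Rx (v i) *ᵥ ket0) (f i)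

end QDP


namespace QDP

section TraceDistance

variable {n : Type*} [Fintype n] [DecidableEq n]

open scoped MatrixOrder in
lemma cfc_sqrt_mul_self {B : Matrix n n ℂ} (hB : B.PosSemidef) : cfc Real.sqrt (B * B) = B := by
  have := hB.nonneg -- for the `cfc_tac` side goals `0 ≤ B` and `0 ≤ B * B`
  rw [← cfcₙ_eq_cfc, ← CFC.sqrt_eq_real_sqrt (B * B), CFC.sqrt_mul_self B]

lemma traceDist_eq_of_mul_self_eq {ρ σ B : Matrix n n ℂ} (hB : B.PosSemidef)
    (hBB : B * B = (ρ - σ)ᴴ * (ρ - σ)) : traceDist ρ σ = B.trace.re / 2 := by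
  have h := (posSemidef_conjTranspose_mul_self (ρ - σ)).isHermitian
  -- `traceDist` unfolds to the eigendecomposition form of `cfc √ ((ρ - σ)ᴴ * (ρ - σ))`
  change 1 / 2 * (h.cfc Real.sqrt).trace.re = _
  rw [← h.cfc_eq, ← hBB, cfc_sqrt_mul_self hB]
  ring

end TraceDistance

section PureStates

variable {n : Type*}

lemma isHermitian_proj (ψ : n → ℂ) : (proj ψ).IsHermitian := by
  rw [IsHermitian, proj, conjTranspose_vecMulVec, star_star]

variable [Fintype n]

lemma proj_mul_proj (ψ φ : n → ℂ) :
    proj ψ * proj φ = (star ψ ⬝ᵥ φ) • vecMulVec ψ (star φ) := by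
  rw [proj, proj, vecMulVec_mul_vecMulVec, vecMulVec_smul]

lemma trace_proj_mul_proj (ψ φ : n → ℂ) :
    (proj ψ * proj φ).trace = ((‖star ψ ⬝ᵥ φ‖ ^ 2 : ℝ) : ℂ) := by
  rw [proj_mul_proj, trace_smul, trace_vecMulVec, dotProduct_comm ψ, star_dotProduct φ ψ,
    smul_eq_mul, Complex.star_def, Complex.mul_conj', Complex.ofReal_pow]

variable {ψ φ : n → ℂ}

lemma proj_sub_proj_mul_self_mul_self (hψ : star ψ ⬝ᵥ ψ = 1) (hφ : star φ ⬝ᵥ φ = 1) :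
    (proj ψ - proj φ) * (proj ψ - proj φ) * (proj ψ - proj φ) =
      (1 - ‖star ψ ⬝ᵥ φ‖ ^ 2) • (proj ψ - proj φ) := by
  set z := star ψ ⬝ᵥ φ
  have hφψ : star φ ⬝ᵥ ψ = star z := star_dotProduct _ _
  have hz : ((1 - ‖z‖ ^ 2 : ℝ) : ℂ) = 1 - z * star z := by
    rw [Complex.star_def, Complex.mul_conj', Complex.ofReal_sub, Complex.ofReal_one,
      Complex.ofReal_pow]
  rw [← Complex.coe_smul, hz]
  simp only [sub_mul, mul_sub, proj, vecMulVec_mul_vecMulVec,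
    vecMulVec_smul, smul_mul_assoc, hψ, hφ, hφψ, one_smul, smul_smul]
  module

lemma trace_proj_sub_proj_mul_self (hψ : star ψ ⬝ᵥ ψ = 1) (hφ : star φ ⬝ᵥ φ = 1) :
    ((proj ψ - proj φ) * (proj ψ - proj φ)).trace =
      ((2 * (1 - ‖star ψ ⬝ᵥ φ‖ ^ 2) : ℝ) : ℂ) := by
  have hφψ : star φ ⬝ᵥ ψ = star (star ψ ⬝ᵥ φ) := star_dotProduct _ _
  simp only [sub_mul, mul_sub, trace_sub, trace_proj_mul_proj, hψ, hφ, hφψ, norm_one, norm_star]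
  push_cast
  ring

variable [DecidableEq n]

lemma traceDist_proj_proj (hψ : star ψ ⬝ᵥ ψ = 1) (hφ : star φ ⬝ᵥ φ = 1)
    (hψφ : ‖star ψ ⬝ᵥ φ‖ < 1) :
    traceDist (proj ψ) (proj φ) = √(1 - ‖star ψ ⬝ᵥ φ‖ ^ 2) := by
  set A := proj ψ - proj φ
  set s := √(1 - ‖star ψ ⬝ᵥ φ‖ ^ 2)
  have hpos : 0 < 1 - ‖star ψ ⬝ᵥ φ‖ ^ 2 := by nlinarith [norm_nonneg (star ψ ⬝ᵥ φ)]
  have hs : 0 < s := Real.sqrt_pos.2 hpos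
  have hss : s * s = 1 - ‖star ψ ⬝ᵥ φ‖ ^ 2 := Real.mul_self_sqrt hpos.le
  have hA : Aᴴ = A := ((isHermitian_proj ψ).sub (isHermitian_proj φ)).eq
  have hAA : (A * A).PosSemidef := by
    simpa only [hA] using posSemidef_conjTranspose_mul_self A
  rw [traceDist_eq_of_mul_self_eq (B := s⁻¹ • (A * A)) (hAA.smul (inv_nonneg.2 hs.le))]
  · rw [trace_smul, trace_proj_sub_proj_mul_self hψ hφ, ← hss, Complex.real_smul,
      Complex.re_ofReal_mul, Complex.ofReal_re]
    field_simp
  · rw [smul_mul_smul_comm, ← mul_assoc, proj_sub_proj_mul_self_mul_self hψ hφ, smul_mul_assoc,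
      smul_smul, ← hss, hA]
    field_simp
    rw [one_smul]

end PureStates

section AngleEncoding

lemma Rx_mulVec_ket0 (θ : ℝ) :
    Rx θ *ᵥ ket0 = ![((Real.cos (θ / 2) : ℝ) : ℂ), -Complex.I * ((Real.sin (θ / 2) : ℝ) : ℂ)] := by
  ext i
  fin_cases i <;> simp [Rx, ket0, mulVec, dotProduct]

lemma star_Rx_mulVec_ket0_dotProduct (a b : ℝ) :
    star (Rx a *ᵥ ket0) ⬝ᵥ (Rx b *ᵥ ket0) = ((Real.cos ((a - b) / 2) : ℝ) : ℂ) := by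
  rw [sub_div, Real.cos_sub, Rx_mulVec_ket0, Rx_mulVec_ket0, dotProduct, Fin.sum_univ_two]
  simp only [Pi.star_apply, Matrix.cons_val_zero, Matrix.cons_val_one, Complex.star_def,
    map_mul, map_neg, Complex.conj_I, Complex.conj_ofReal, Complex.ofReal_add, Complex.ofReal_mul]
  linear_combination -((Real.sin (a / 2) : ℂ) * (Real.sin (b / 2) : ℂ)) * Complex.I_mul_I

variable {m : ℕ}

lemma star_angleEncode_dotProduct (v w : Fin m → ℝ) :
    star (angleEncode v) ⬝ᵥ angleEncode w = ∏ i, ((Real.cos ((v i - w i) / 2) : ℝ) : ℂ) := by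
  calc star (angleEncode v) ⬝ᵥ angleEncode w
      = ∑ f : Fin m → Fin 2, ∏ i, star ((Rx (v i) *ᵥ ket0) (f i)) * (Rx (w i) *ᵥ ket0) (f i) := by
        simp only [dotProduct, Pi.star_apply, angleEncode, star_prod, Finset.prod_mul_distrib]
    _ = ∏ i, star (Rx (v i) *ᵥ ket0) ⬝ᵥ (Rx (w i) *ᵥ ket0) := by
        simp only [dotProduct, Pi.star_apply]
        rw [Finset.prod_univ_sum, Fintype.piFinset_univ]
    _ = _ := by simp only [star_Rx_mulVec_ket0_dotProduct]

lemma star_angleEncode_dotProduct_self (v : Fin m → ℝ) :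
    star (angleEncode v) ⬝ᵥ angleEncode v = 1 := by
  simp [star_angleEncode_dotProduct]

lemma star_angleEncode_dotProduct_of_eq_of_ne {v w : Fin m → ℝ} (j : Fin m)
    (hvw : ∀ i, i ≠ j → v i = w i) :
    star (angleEncode v) ⬝ᵥ angleEncode w = ((Real.cos ((v j - w j) / 2) : ℝ) : ℂ) := by
  rw [star_angleEncode_dotProduct, Finset.prod_eq_single j (fun i _ hi => by simp [hvw i hi])
    (fun hj => absurd (Finset.mem_univ j) hj)]

end AngleEncoding

end QDP

open QDP in
/-- Binary classical vectors differing in exactly one coordinate are angle-encoded into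
quantum states at trace distance `sin(1/2)`. -/
theorem traceDist_angleEncode_binary {m : ℕ} (v w : Fin m → ℝ)
    (hv : ∀ i, v i = 0 ∨ v i = 1) (hw : ∀ i, w i = 0 ∨ w i = 1)
    (j : Fin m) (hj : v j ≠ w j) (hvw : ∀ i, i ≠ j → v i = w i) :
    traceDist (proj (angleEncode v)) (proj (angleEncode w)) = Real.sin (1 / 2) := by
  have hcos : Real.cos ((v j - w j) / 2) = Real.cos (1 / 2) := by
    rcases hv j with hvj | hvj <;> rcases hw j with hwj | hwj <;> simp_all [neg_div, Real.cos_neg]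
  have hoverlap : star (angleEncode v) ⬝ᵥ angleEncode w = ((Real.cos (1 / 2) : ℝ) : ℂ) := by
    rw [star_angleEncode_dotProduct_of_eq_of_ne j hvw, hcos]
  have hsin : 0 < Real.sin (1 / 2) :=
    Real.sin_pos_of_pos_of_lt_pi (by norm_num) (by linarith [Real.pi_gt_three])
  have hnorm_sq : ‖((Real.cos (1 / 2) : ℝ) : ℂ)‖ ^ 2 = 1 - Real.sin (1 / 2) ^ 2 := by
    rw [Complex.norm_real, Real.norm_eq_abs, sq_abs, Real.cos_sq']
  rw [traceDist_proj_proj (star_angleEncode_dotProduct_self v) (star_angleEncode_dotProduct_self w)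
      (by rw [hoverlap, ← sq_lt_one_iff₀ (norm_nonneg _), hnorm_sq]; nlinarith),
    hoverlap, hnorm_sq, sub_sub_cancel, Real.sqrt_sq hsin.le]
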